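/- Suppose f : ℝ^d → ℝ is twice continuously differentiable with γ-Lipschitz Hessian. Fix μ ∈ ℝ^d, α > 0, and a symmetric positive definite d×d matrix Σ with Σ ⪯ τ^{-1}·I for some τ > 0. Let u ~ N(0, I_d) and set ν = (f(μ + αΣ^{1/2}u) − f(μ − αΣ^{1/2}u) − 2α⟨∇f(μ), Σ^{1/2}u⟩)/(2α). Then for any 0 < δ < 1, with probability at least 1 − δ, |ν| ≤ γα²·(2d + 3 log(1/δ))^{3/2}/(6τ^{3/2}). -/

import Mathlib

open MeasureTheory ProbabilityTheory Matrix
open scoped BigOperators RealInnerProductSpace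

noncomputable section

open scoped ComplexOrder in
/-- The square root of a positive semidefinite matrix (as defined in the older Mathlib). -/
def Matrix.PosSemidef.sqrt {n 𝕜 : Type*} [Fintype n] [RCLike 𝕜] [DecidableEq n] {A : Matrix n n 𝕜}
    (hA : A.PosSemidef) : Matrix n n 𝕜 :=
  (hA.1.eigenvectorUnitary : Matrix n n 𝕜) * diagonal ((↑) ∘ (√·) ∘ hA.1.eigenvalues) *
  (star hA.1.eigenvectorUnitary : Matrix n n 𝕜)

abbrev Vec (d : ℕ) := EuclideanSpace ℝ (Fin d)
abbrev Mat (d : ℕ) := Matrix (Fin d) (Fin d) ℝ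

/-- View a Euclidean vector as a plain function. -/
def toPi {d : ℕ} (u : Vec d) : Fin d → ℝ := u
/-- View a plain function as a Euclidean vector. -/
def ofPi {d : ℕ} (u : Fin d → ℝ) : Vec d := WithLp.toLp 2 u

/-- Matrix-vector multiplication on Euclidean space. -/
def mvec {d : ℕ} (A : Mat d) (u : Vec d) : Vec d := ofPi (A.mulVec (toPi u))

/-- The standard Gaussian measure N(0, I_d) on ℝ^d. -/
def gaussD (d : ℕ) : Measure (Vec d) :=
  (Measure.pi fun _ : Fin d => gaussianReal 0 1).map (MeasurableEquiv.toLp 2 (Fin d → ℝ))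

/-- Frobenius norm of a matrix. -/
def matFrobNorm {m n : ℕ} (A : Matrix (Fin m) (Fin n) ℝ) : ℝ :=
  Real.sqrt (∑ i, ∑ j, (A i j) ^ 2)

/-- Operator (spectral) norm of a matrix. -/
def matOpNorm {m n : ℕ} (A : Matrix (Fin m) (Fin n) ℝ) : ℝ :=
  ‖LinearMap.toContinuousLinearMap (Matrix.toEuclideanLin A)‖

/-- Loewner order `A ⪯ B`. -/
def loeLE {d : ℕ} (A B : Mat d) : Prop := (B - A).PosSemidef

/-- Hessian matrix of `f` at `x`. -/
def hess {d : ℕ} (f : Vec d → ℝ) (x : Vec d) : Mat d :=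
  Matrix.of fun i j =>
    iteratedFDeriv ℝ 2 f x ![EuclideanSpace.single i 1, EuclideanSpace.single j 1]

/-- Membership in `S = {Σ symmetric : ζ⁻¹ I ⪯ Σ ⪯ τ⁻¹ I}`. -/
def Smem {d : ℕ} (τ ζ : ℝ) (A : Mat d) : Prop :=
  A.IsSymm ∧ loeLE (ζ⁻¹ • 1) A ∧ loeLE A (τ⁻¹ • 1)

/-- Membership in `S' = {A symmetric : τ I ⪯ A ⪯ ζ I}`. -/
def S'mem {d : ℕ} (τ ζ : ℝ) (A : Mat d) : Prop :=
  A.IsSymm ∧ loeLE (τ • 1) A ∧ loeLE A (ζ • 1)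

/-- The regularized reparameterized objective `Q_α(μ, Σ)`. -/
def Qa {d : ℕ} (f : Vec d → ℝ) (α : ℝ) (μ : Vec d) (S : Mat d) (hS : S.PosSemidef) : ℝ :=
  (∫ u, f (μ + α • mvec hS.sqrt u) ∂ gaussD d) - α ^ 2 / 2 * Real.log S.det

/-!
With `w = Σ^{1/2} u`, the numerator of `ν` is the odd part of the second-order Taylor remainder
of `f` along the segment `[μ - α w, μ + α w]`. Its second derivative in the step length is a
difference of Hessians at points `2 s α ‖w‖` apart, so integrating the Lipschitz bound twice gives
`|ν| ≤ γ α² ‖w‖³ / 6`, while `Σ ⪯ τ⁻¹ I` gives `‖w‖² ≤ ‖u‖² / τ`. Finally a Chernoff bound with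
`E exp(‖u‖² / 3) = 3^{d/2}` shows `P(‖u‖² ≥ 2 d + 3 log(1/δ)) ≤ δ`, since `√3 ≤ e^{2/3}`.
-/

open Real

section Gaussian

lemma gaussianPDFReal_zero_one_mul_exp_mul_sq (c x : ℝ) :
    gaussianPDFReal 0 1 x * exp (c * x ^ 2) = (√(2 * π))⁻¹ * exp (-(1 / 2 - c) * x ^ 2) := by
  rw [gaussianPDFReal, mul_assoc, ← exp_add]
  congr 2
  · simp
  · push_cast; ring

lemma integral_exp_mul_sq_gaussianReal {c : ℝ} (hc : c < 1 / 2) :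
    ∫ x, exp (c * x ^ 2) ∂gaussianReal 0 1 = (√(1 - 2 * c))⁻¹ := by
  rw [integral_gaussianReal_eq_integral_smul one_ne_zero]
  simp_rw [smul_eq_mul, gaussianPDFReal_zero_one_mul_exp_mul_sq]
  rw [integral_const_mul, integral_gaussian,
    ← sqrt_inv, ← sqrt_inv, ← sqrt_mul (inv_nonneg.2 (by positivity))]
  have : 0 < 1 - 2 * c := by linarith
  congr 1
  field_simp

lemma integrable_exp_mul_sq_gaussianReal {c : ℝ} (hc : c < 1 / 2) :
    Integrable (fun x ↦ exp (c * x ^ 2)) (gaussianReal 0 1) := by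
  rw [gaussianReal_of_var_ne_zero _ one_ne_zero, integrable_withDensity_iff_integrable_smul'
    (measurable_gaussianPDF 0 1) (ae_of_all _ fun _ ↦ gaussianPDF_lt_top)]
  simp_rw [toReal_gaussianPDF, smul_eq_mul, gaussianPDFReal_zero_one_mul_exp_mul_sq]
  exact (integrable_exp_neg_mul_sq (by linarith)).const_mul _

lemma norm_toLp_sq {d : ℕ} (v : Fin d → ℝ) :
    ‖WithLp.toLp 2 v‖ ^ 2 = ∑ i, v i ^ 2 := by
  simp [EuclideanSpace.norm_sq_eq]

instance isProbabilityMeasure_gaussD (d : ℕ) : IsProbabilityMeasure (gaussD d) := by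
  unfold gaussD; exact Measure.isProbabilityMeasure_map (by fun_prop)

lemma integral_exp_mul_norm_sq_gaussD (d : ℕ) {c : ℝ} (hc : c < 1 / 2) :
    ∫ u : Vec d, exp (c * ‖u‖ ^ 2) ∂gaussD d = (√(1 - 2 * c))⁻¹ ^ d := by
  have h := integral_fintype_prod_eq_pow (ι := Fin d) (fun x ↦ exp (c * x ^ 2))
    (μ := gaussianReal 0 1)
  rw [Fintype.card_fin, integral_exp_mul_sq_gaussianReal hc] at h
  rw [gaussD, integral_map_equiv, ← h]
  simp [norm_toLp_sq, Finset.mul_sum, exp_sum]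

lemma integrable_exp_mul_norm_sq_gaussD (d : ℕ) {c : ℝ} (hc : c < 1 / 2) :
    Integrable (fun u : Vec d ↦ exp (c * ‖u‖ ^ 2)) (gaussD d) := by
  rw [gaussD, integrable_map_equiv]
  simpa [Function.comp_def, norm_toLp_sq, Finset.mul_sum, exp_sum] using
    Integrable.fintype_prod (μ := fun _ : Fin d ↦ gaussianReal 0 1)
      fun _ ↦ integrable_exp_mul_sq_gaussianReal hc

lemma gaussD_real_le_norm_sq_le (d : ℕ) (t : ℝ) {c : ℝ} (hc₀ : 0 ≤ c) (hc : c < 1 / 2) :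
    (gaussD d).real {u | t ≤ ‖u‖ ^ 2} ≤ exp (-c * t) * (√(1 - 2 * c))⁻¹ ^ d := by
  simpa [mgf, integral_exp_mul_norm_sq_gaussD d hc] using
    measure_ge_le_exp_mul_mgf t hc₀ (integrable_exp_mul_norm_sq_gaussD d hc)

lemma inv_sqrt_one_third_le_exp : (√(1 - 2 * (1 / 3)))⁻¹ ≤ exp (2 / 3) := by
  rw [← sqrt_inv, sqrt_le_left (exp_pos _).le, ← exp_nat_mul]
  norm_num
  linarith [quadratic_le_exp_of_nonneg (by norm_num : (0 : ℝ) ≤ 4 / 3)]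

lemma exp_mul_inv_sqrt_pow_le (d : ℕ) {δ : ℝ} (hδ : 0 < δ) :
    exp (-(1 / 3) * (2 * d + 3 * log (1 / δ))) * (√(1 - 2 * (1 / 3)))⁻¹ ^ d ≤ δ := by
  have hexp : exp (-(1 / 3) * (2 * d + 3 * log (1 / δ))) = exp (-(2 / 3)) ^ d * δ := by
    rw [one_div δ, log_inv, ← exp_nat_mul, ← exp_log hδ, ← exp_add, log_exp]
    ring_nf
  rw [hexp, mul_right_comm, ← mul_pow]
  refine mul_le_of_le_one_left hδ.le (pow_le_one₀ (by positivity) ?_)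
  rw [Real.exp_neg, inv_mul_le_iff₀ (exp_pos _), mul_one]
  exact inv_sqrt_one_third_le_exp

end Gaussian

section SymmetricTaylor

variable {E : Type*} [NormedAddCommGroup E] [NormedSpace ℝ E]

lemma hasDerivAt_comp_add_smul {F : Type*} [NormedAddCommGroup F] [NormedSpace ℝ F]
    {g : E → F} (hg : Differentiable ℝ g) (x h : E) (t : ℝ) :
    HasDerivAt (fun s : ℝ ↦ g (x + s • h)) (fderiv ℝ g (x + t • h) h) t := by
  have hline : HasDerivAt (fun s : ℝ ↦ x + s • h) h t := by
    simpa using ((hasDerivAt_id t).smul_const h).const_add x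
  exact (hg _).hasFDerivAt.comp_hasDerivAt t hline

lemma abs_le_of_abs_deriv_le_mul_pow {φ φ' : ℝ → ℝ} (hφ : ∀ t, HasDerivAt φ (φ' t) t)
    (hφ0 : φ 0 = 0) {C : ℝ} {n : ℕ} (hφ' : ∀ t, 0 ≤ t → |φ' t| ≤ C * t ^ n)
    {t : ℝ} (ht : 0 ≤ t) : |φ t| ≤ C * t ^ (n + 1) / (n + 1) := by
  have hB : ∀ s, HasDerivAt (fun s : ℝ ↦ C * s ^ (n + 1) / (n + 1)) (C * s ^ n) s := by
    intro s
    refine (((hasDerivAt_pow (n + 1) s).const_mul C).div_const ((n : ℝ) + 1)).congr_deriv ?_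
    push_cast
    field_simp
  exact image_norm_le_of_norm_deriv_right_le_deriv_boundary
    (fun s _ ↦ (hφ s).continuousAt.continuousWithinAt) (fun s _ ↦ (hφ s).hasDerivWithinAt)
    (by simp [hφ0]) hB (fun s hs ↦ hφ' s hs.1) ⟨ht, le_rfl⟩

theorem abs_sub_sub_two_fderiv_le {f : E → ℝ} (hf : ContDiff ℝ 2 f) {γ : ℝ}
    (hγ : ∀ y y' h : E,
      |fderiv ℝ (fderiv ℝ f) y h h - fderiv ℝ (fderiv ℝ f) y' h h|
        ≤ γ * ‖y - y'‖ * ‖h‖ ^ 2)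
    (x h : E) :
    |f (x + h) - f (x - h) - 2 * fderiv ℝ f x h| ≤ γ * ‖h‖ ^ 3 / 3 := by
  have hf1 : Differentiable ℝ f := hf.differentiable (by norm_num)
  have hf2 : Differentiable ℝ (fderiv ℝ f) :=
    (hf.fderiv_right (m := 1) (by norm_num)).differentiable (by norm_num)
  set g : ℝ → ℝ := fun t ↦ f (x + t • h) - f (x + t • -h) - 2 * t * fderiv ℝ f x h
  set φ : ℝ → ℝ := fun t ↦ fderiv ℝ f (x + t • h) h + fderiv ℝ f (x + t • -h) h
    - 2 * fderiv ℝ f x h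
  set ψ : ℝ → ℝ := fun t ↦
    fderiv ℝ (fderiv ℝ f) (x + t • h) h h - fderiv ℝ (fderiv ℝ f) (x + t • -h) h h
  have hg : ∀ t, HasDerivAt g (φ t) t := fun t ↦
    (((hasDerivAt_comp_add_smul hf1 x h t).sub (hasDerivAt_comp_add_smul hf1 x (-h) t)).sub
      (((hasDerivAt_id t).const_mul 2).mul_const (fderiv ℝ f x h))).congr_deriv
      (by simp [φ, sub_eq_add_neg])
  have hφ : ∀ t, HasDerivAt φ (ψ t) t := fun t ↦
    ((((hasDerivAt_comp_add_smul hf2 x h t).clm_apply (hasDerivAt_const t h)).add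
      ((hasDerivAt_comp_add_smul hf2 x (-h) t).clm_apply (hasDerivAt_const t h))).sub_const
      (2 * fderiv ℝ f x h)).congr_deriv (by simp [ψ, sub_eq_add_neg])
  have hψ : ∀ t, 0 ≤ t → |ψ t| ≤ 2 * γ * ‖h‖ ^ 3 * t ^ 1 := fun t ht ↦ by
    calc |ψ t| ≤ γ * ‖(x + t • h) - (x + t • -h)‖ * ‖h‖ ^ 2 := hγ _ _ h
      _ = 2 * γ * ‖h‖ ^ 3 * t ^ 1 := by
        rw [show (x + t • h) - (x + t • -h) = (2 * t) • h by module, norm_smul,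
          Real.norm_of_nonneg (by positivity)]
        ring
  have hφ_le : ∀ t, 0 ≤ t → |φ t| ≤ γ * ‖h‖ ^ 3 * t ^ 2 := fun t ht ↦ by
    convert abs_le_of_abs_deriv_le_mul_pow hφ (by simp [φ]; ring) hψ ht using 1
    ring
  calc |f (x + h) - f (x - h) - 2 * fderiv ℝ f x h| = |g 1| := by simp [g, sub_eq_add_neg]
    _ ≤ γ * ‖h‖ ^ 3 * 1 ^ (2 + 1) / (2 + 1) :=
      abs_le_of_abs_deriv_le_mul_pow hg (by simp [g]) hφ_le zero_le_one
    _ = γ * ‖h‖ ^ 3 / 3 := by norm_num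

end SymmetricTaylor

section Matrices

variable {d : ℕ}

lemma inner_mvec (A : Mat d) (u v : Vec d) : ⟪u, mvec A v⟫ = toPi u ⬝ᵥ (A *ᵥ toPi v) := by
  simp [EuclideanSpace.inner_eq_star_dotProduct, mvec, ofPi, toPi, dotProduct_comm]

lemma abs_inner_mvec_self_le (A : Mat d) (u : Vec d) :
    |⟪u, mvec A u⟫| ≤ matOpNorm A * ‖u‖ ^ 2 := by
  let L := LinearMap.toContinuousLinearMap (Matrix.toEuclideanLin A)
  calc |⟪u, mvec A u⟫| = |⟪u, L u⟫| := rfl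
    _ ≤ ‖u‖ * ‖L u‖ := abs_real_inner_le_norm u (L u)
    _ ≤ ‖u‖ * (‖L‖ * ‖u‖) := by gcongr; exact L.le_opNorm u
    _ = matOpNorm A * ‖u‖ ^ 2 := by rw [matOpNorm]; ring

lemma apply_apply_eq_inner_mvec (B : Vec d →L[ℝ] Vec d →L[ℝ] ℝ) (h k : Vec d) :
    B h k = ⟪h, mvec (Matrix.of fun i j ↦
      B (EuclideanSpace.single i 1) (EuclideanSpace.single j 1)) k⟫ := by
  conv_lhs => rw [← (EuclideanSpace.basisFun (Fin d) ℝ).sum_repr h,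
    ← (EuclideanSpace.basisFun (Fin d) ℝ).sum_repr k]
  simp [inner_mvec, toPi, dotProduct, mulVec, Finset.mul_sum, mul_comm, mul_left_comm]
  exact Finset.sum_comm

lemma hess_apply (f : Vec d → ℝ) (x : Vec d) (i j : Fin d) :
    hess f x i j =
      fderiv ℝ (fderiv ℝ f) x (EuclideanSpace.single i 1) (EuclideanSpace.single j 1) := by
  simp [hess, iteratedFDeriv_two_apply]

lemma abs_fderiv_fderiv_sub_le_matOpNorm_hess_sub (f : Vec d → ℝ) (y y' h : Vec d) :
    |fderiv ℝ (fderiv ℝ f) y h h - fderiv ℝ (fderiv ℝ f) y' h h|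
      ≤ matOpNorm (hess f y - hess f y') * ‖h‖ ^ 2 := by
  have hsub : hess f y - hess f y' = Matrix.of fun i j ↦
      (fderiv ℝ (fderiv ℝ f) y - fderiv ℝ (fderiv ℝ f) y') (EuclideanSpace.single i 1)
        (EuclideanSpace.single j 1) := by
    ext i j; simp [hess_apply]
  rw [hsub, ← _root_.sub_apply, ← _root_.sub_apply, apply_apply_eq_inner_mvec]
  exact abs_inner_mvec_self_le _ h

lemma Matrix.PosSemidef.transpose_sqrt {A : Mat d} (hA : A.PosSemidef) :
    hA.sqrtᵀ = hA.sqrt := by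
  rw [Matrix.PosSemidef.sqrt, Matrix.star_eq_conjTranspose, conjTranspose_eq_transpose_of_trivial,
    transpose_mul, transpose_mul, transpose_transpose, diagonal_transpose, mul_assoc]

lemma Matrix.PosSemidef.sqrt_mul_self {A : Mat d} (hA : A.PosSemidef) :
    hA.sqrt * hA.sqrt = A := by
  set U : Mat d := (hA.1.eigenvectorUnitary : Mat d)
  have hU : star U * U = 1 := Unitary.coe_star_mul_self _
  have hD : diagonal (RCLike.ofReal ∘ (√·) ∘ hA.1.eigenvalues : Fin d → ℝ)
      * diagonal (RCLike.ofReal ∘ (√·) ∘ hA.1.eigenvalues)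
      = diagonal (RCLike.ofReal ∘ hA.1.eigenvalues) := by
    rw [diagonal_mul_diagonal]
    congr 1 with i
    simp [mul_self_sqrt (hA.eigenvalues_nonneg i)]
  conv_rhs => rw [hA.1.spectral_theorem]
  calc hA.sqrt * hA.sqrt
      = U * (diagonal (RCLike.ofReal ∘ (√·) ∘ hA.1.eigenvalues) * (star U * U)
          * diagonal (RCLike.ofReal ∘ (√·) ∘ hA.1.eigenvalues)) * star U := by
        simp only [Matrix.PosSemidef.sqrt, U, Matrix.mul_assoc]
    _ = _ := by
        rw [hU, Matrix.mul_one, hD]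
        simp [Unitary.conjStarAlgAut_apply, U, Matrix.mul_assoc]

lemma norm_mvec_sqrt_sq {A : Mat d} (hA : A.PosSemidef) (u : Vec d) :
    ‖mvec hA.sqrt u‖ ^ 2 = ⟪u, mvec A u⟫ := by
  rw [← real_inner_self_eq_norm_sq, inner_mvec, inner_mvec]
  simp only [toPi, mvec, ofPi]
  rw [dotProduct_mulVec, ← mulVec_transpose, hA.transpose_sqrt, mulVec_mulVec, hA.sqrt_mul_self,
    dotProduct_comm]

lemma inner_mvec_self_le_of_loeLE {A : Mat d} {c : ℝ} (hA : loeLE A (c • 1)) (u : Vec d) :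
    ⟪u, mvec A u⟫ ≤ c * ‖u‖ ^ 2 := by
  have := hA.dotProduct_mulVec_nonneg (toPi u)
  rw [← real_inner_self_eq_norm_sq, inner_mvec, EuclideanSpace.inner_eq_star_dotProduct]
  simp only [toPi, star_trivial, sub_mulVec, dotProduct_sub, smul_mulVec, one_mulVec,
    dotProduct_smul, smul_eq_mul] at this ⊢
  linarith

end Matrices

lemma abs_symmetric_difference_sub_inner_gradient_le {E : Type*} [NormedAddCommGroup E]
    [InnerProductSpace ℝ E] [CompleteSpace E] {f : E → ℝ} (hf : ContDiff ℝ 2 f) {γ : ℝ}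
    (hγ : ∀ y y' h : E,
      |fderiv ℝ (fderiv ℝ f) y h h - fderiv ℝ (fderiv ℝ f) y' h h|
        ≤ γ * ‖y - y'‖ * ‖h‖ ^ 2)
    (μ w : E) {α : ℝ} (hα : 0 < α) :
    |(f (μ + α • w) - f (μ - α • w) - 2 * α * ⟪gradient f μ, w⟫) / (2 * α)|
      ≤ γ * α ^ 2 * ‖w‖ ^ 3 / 6 := by
  have hgrad : 2 * α * ⟪gradient f μ, w⟫ = 2 * fderiv ℝ f μ (α • w) := by
    rw [inner_gradient_left, map_smul, smul_eq_mul]; ring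
  have h2α : 0 < 2 * α := by positivity
  rw [hgrad, abs_div, abs_of_pos h2α, div_le_iff₀ h2α]
  calc _ ≤ γ * ‖α • w‖ ^ 3 / 3 := abs_sub_sub_two_fderiv_le hf hγ μ (α • w)
    _ = γ * α ^ 2 * ‖w‖ ^ 3 / 6 * (2 * α) := by rw [norm_smul, norm_of_nonneg hα.le]; ring

lemma pow_three_le_rpow_of_sq_le {a b : ℝ} (ha : 0 ≤ a) (h : a ^ 2 ≤ b) :
    a ^ 3 ≤ b ^ (3 / 2 : ℝ) := by
  calc a ^ 3 = (a ^ 2) ^ (3 / 2 : ℝ) := by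
        rw [← rpow_natCast, ← rpow_natCast, ← rpow_mul ha]; norm_num
    _ ≤ b ^ (3 / 2 : ℝ) := by gcongr

lemma ofReal_one_sub_le_measure_compl {Ω : Type*} [MeasurableSpace Ω] {P : Measure Ω}
    [IsProbabilityMeasure P] {s : Set Ω} (hs : MeasurableSet s) {δ : ℝ} (h : P.real s ≤ δ) :
    ENNReal.ofReal (1 - δ) ≤ P sᶜ := by
  rw [← ofReal_measureReal, probReal_compl_eq_one_sub hs]
  gcongr

lemma abs_symmetric_remainder_le_of_norm_sq_le {d : ℕ} {f : Vec d → ℝ} (hf : ContDiff ℝ 2 f)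
    {γ : ℝ} (hγ0 : 0 ≤ γ) (hγ : ∀ x y : Vec d, matOpNorm (hess f x - hess f y) ≤ γ * ‖x - y‖)
    (μ : Vec d) {α : ℝ} (hα : 0 < α) {τ : ℝ} (hτ : 0 < τ) {S : Mat d} (hS : S.PosSemidef)
    (hSle : loeLE S (τ⁻¹ • 1)) {t : ℝ} {u : Vec d} (hu : ‖u‖ ^ 2 ≤ t) :
    |(f (μ + α • mvec hS.sqrt u) - f (μ - α • mvec hS.sqrt u)
        - 2 * α * ⟪gradient f μ, mvec hS.sqrt u⟫) / (2 * α)|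
      ≤ γ * α ^ 2 * t ^ (3 / 2 : ℝ) / (6 * τ ^ (3 / 2 : ℝ)) := by
  have hγ' : ∀ y y' h : Vec d, |fderiv ℝ (fderiv ℝ f) y h h - fderiv ℝ (fderiv ℝ f) y' h h|
      ≤ γ * ‖y - y'‖ * ‖h‖ ^ 2 := fun y y' h ↦
    (abs_fderiv_fderiv_sub_le_matOpNorm_hess_sub f y y' h).trans (by gcongr; exact hγ y y')
  have hw : ‖mvec hS.sqrt u‖ ^ 2 ≤ τ⁻¹ * t := by
    rw [norm_mvec_sqrt_sq]
    exact (inner_mvec_self_le_of_loeLE hSle u).trans (by gcongr)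
  calc _ ≤ γ * α ^ 2 * ‖mvec hS.sqrt u‖ ^ 3 / 6 :=
        abs_symmetric_difference_sub_inner_gradient_le hf hγ' μ _ hα
    _ ≤ γ * α ^ 2 * (τ⁻¹ * t) ^ (3 / 2 : ℝ) / 6 := by
        gcongr; exact pow_three_le_rpow_of_sq_le (norm_nonneg _) hw
    _ = _ := by
        rw [mul_rpow (by positivity) ((sq_nonneg _).trans hu), inv_rpow hτ.le]; ring

theorem stmt8_general {d : ℕ} (f : Vec d → ℝ) (γ : ℝ) (hγ0 : 0 ≤ γ)
    (hf : ContDiff ℝ 2 f)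
    (hγ : ∀ x y : Vec d, matOpNorm (hess f x - hess f y) ≤ γ * ‖x - y‖)
    (μ : Vec d) (α : ℝ) (hα : 0 < α) (τ : ℝ) (hτ : 0 < τ)
    (S : Mat d) (hS : S.PosDef) (hSle : loeLE S (τ⁻¹ • 1))
    (δ : ℝ) (hδ0 : 0 < δ) :
    ENNReal.ofReal (1 - δ)
      ≤ gaussD d {u : Vec d |
          |(f (μ + α • mvec hS.posSemidef.sqrt u) - f (μ - α • mvec hS.posSemidef.sqrt u)
              - 2 * α * ⟪gradient f μ, mvec hS.posSemidef.sqrt u⟫) / (2 * α)|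
            ≤ γ * α ^ 2 * (2 * (d : ℝ) + 3 * Real.log (1 / δ)) ^ (3 / 2 : ℝ)
                / (6 * τ ^ (3 / 2 : ℝ))} := by
  set t := 2 * (d : ℝ) + 3 * Real.log (1 / δ)
  have htail : (gaussD d).real {u | t ≤ ‖u‖ ^ 2} ≤ δ :=
    (gaussD_real_le_norm_sq_le d t (c := 1 / 3) (by norm_num) (by norm_num)).trans
      (exp_mul_inv_sqrt_pow_le d hδ0)
  refine (ofReal_one_sub_le_measure_compl (measurableSet_le measurable_const (by fun_prop))
    htail).trans (measure_mono fun u (hu : ¬t ≤ ‖u‖ ^ 2) ↦ ?_)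
  exact abs_symmetric_remainder_le_of_norm_sq_le hf hγ0 hγ μ hα hτ hS.posSemidef hSle
    (not_le.1 hu).le

/-- high-probability bound on the Taylor remainder term
`ν = (f(μ+αΣ^{1/2}u) − f(μ−αΣ^{1/2}u) − 2α⟨∇f(μ), Σ^{1/2}u⟩)/(2α)`. -/
theorem stmt8 {d : ℕ} (hd : 1 ≤ d) (f : Vec d → ℝ) (γ : ℝ) (hγ0 : 0 ≤ γ)
    (hf : ContDiff ℝ 2 f)
    (hγ : ∀ x y : Vec d, matOpNorm (hess f x - hess f y) ≤ γ * ‖x - y‖)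
    (μ : Vec d) (α : ℝ) (hα : 0 < α) (τ : ℝ) (hτ : 0 < τ)
    (S : Mat d) (hSsymm : S.IsSymm) (hS : S.PosDef) (hSle : loeLE S (τ⁻¹ • 1))
    (δ : ℝ) (hδ0 : 0 < δ) (hδ1 : δ < 1) :
    ENNReal.ofReal (1 - δ)
      ≤ gaussD d {u : Vec d |
          |(f (μ + α • mvec hS.posSemidef.sqrt u) - f (μ - α • mvec hS.posSemidef.sqrt u)
              - 2 * α * ⟪gradient f μ, mvec hS.posSemidef.sqrt u⟫) / (2 * α)|
            ≤ γ * α ^ 2 * (2 * (d : ℝ) + 3 * Real.log (1 / δ)) ^ (3 / 2 : ℝ)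
                / (6 * τ ^ (3 / 2 : ℝ))} :=
  stmt8_general f γ hγ0 hf hγ μ α hα τ hτ S hS hSle δ hδ0
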